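/- Let p, q ∈ [0, 1/4] and let n ≥ 16 be a natural number with n(p+q) > 1/2 and n·|p−q| < √(n(p+q)). Suppose X, X' ~ Bin(n,p) and Y, Y' ~ Bin(n,q) are mutually independent. Then Δ := E[|X−Y| + |X'−Y'| − |X−X'| − |Y−Y'|] ≥ n²(p−q)²/(40·√(n(p+q))). -/

import Mathlib

/-!
Writing `|j - k|` as the number of levels `i < n` that separate `j` and `k`, independence turns
`Δ` into `2 ∑_{i<n} (F_p(i) - F_q(i))²`, where `F_r` is the distribution function of `Bin(n, r)`.
Differentiating Bernstein polynomials in `r` gives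
`F_q(i) - F_p(i) = ∫_q^p n b_{n-1,i}(r) dr =: g_i ≥ 0` for `q ≤ p`.
The `g_i` have total mass `t = n (p - q)` and, by the variance of `Bin(n - 1, r)`, second moment
about `s² / 2` at most `2 s² t`, where `s = √(n (p + q))`. By Chebyshev, half of the mass lies on
at most `6 s` levels, and Cauchy–Schwarz there gives `t² ≤ 24 s ∑ g_i²`.
-/

open MeasureTheory ProbabilityTheory

/-- The binomial distribution `Bin(n, p)`, as a measure on `ℝ` supported on `{0, 1, …, n}`. -/
noncomputable def binomialMeasure (n : ℕ) (p : ℝ) : Measure ℝ :=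
  ∑ k ∈ Finset.range (n + 1),
    ENNReal.ofReal ((n.choose k : ℝ) * p ^ k * (1 - p) ^ (n - k)) • Measure.dirac (k : ℝ)

open Finset

namespace bernsteinPolynomial

lemma eval_eq (n k : ℕ) (r : ℝ) :
    (bernsteinPolynomial ℝ n k).eval r = n.choose k * r ^ k * (1 - r) ^ (n - k) := by
  simp [bernsteinPolynomial]

lemma eval_nonneg (n k : ℕ) {r : ℝ} (h0 : 0 ≤ r) (h1 : r ≤ 1) :
    0 ≤ (bernsteinPolynomial ℝ n k).eval r := by
  rw [eval_eq]
  have := sub_nonneg.2 h1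
  positivity

lemma sum_eval (n : ℕ) (r : ℝ) :
    ∑ k ∈ range (n + 1), (bernsteinPolynomial ℝ n k).eval r = 1 := by
  simpa [Polynomial.eval_finsetSum] using congrArg (Polynomial.eval r) (sum ℝ n)

lemma sum_mul_eval (n : ℕ) (r : ℝ) :
    ∑ k ∈ range (n + 1), (k : ℝ) * (bernsteinPolynomial ℝ n k).eval r = n * r := by
  simpa [Polynomial.eval_finsetSum] using congrArg (Polynomial.eval r) (sum_smul ℝ n)

lemma sum_sq_sub_mul_eval (n : ℕ) (r : ℝ) :
    ∑ k ∈ range (n + 1), (n * r - k) ^ 2 * (bernsteinPolynomial ℝ n k).eval r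
      = n * r * (1 - r) := by
  simpa [Polynomial.eval_finsetSum] using congrArg (Polynomial.eval r) (variance ℝ n)

lemma sum_sq_natCast_sub_mul_eval (n : ℕ) (r m : ℝ) :
    ∑ k ∈ range (n + 1), ((k : ℝ) - m) ^ 2 * (bernsteinPolynomial ℝ n k).eval r
      = n * r * (1 - r) + (n * r - m) ^ 2 := by
  have h (k : ℕ) : ((k : ℝ) - m) ^ 2 * (bernsteinPolynomial ℝ n k).eval r
      = (n * r - k) ^ 2 * (bernsteinPolynomial ℝ n k).eval r
        + 2 * (n * r - m) * ((k : ℝ) * (bernsteinPolynomial ℝ n k).eval r)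
        - (2 * n * r * (n * r - m) - (n * r - m) ^ 2) * (bernsteinPolynomial ℝ n k).eval r := by
    ring
  simp only [h, sum_sub_distrib, sum_add_distrib, ← mul_sum, sum_sq_sub_mul_eval, sum_mul_eval,
    sum_eval]
  ring

lemma derivative_sum_range {R : Type*} [CommRing R] (n i : ℕ) :
    Polynomial.derivative (∑ k ∈ range (i + 1), bernsteinPolynomial R n k)
      = -(n : Polynomial R) * bernsteinPolynomial R (n - 1) i := by
  induction i with
  | zero => simp [derivative_zero]
  | succ i ih =>
    rw [sum_range_succ, Polynomial.derivative_add, ih, derivative_succ]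
    ring

lemma sum_range_eval_sub_eq_integral (n i : ℕ) (a b : ℝ) :
    ∑ k ∈ range (i + 1), (bernsteinPolynomial ℝ n k).eval a
        - ∑ k ∈ range (i + 1), (bernsteinPolynomial ℝ n k).eval b
      = ∫ r in a..b, n * (bernsteinPolynomial ℝ (n - 1) i).eval r := by
  set P := ∑ k ∈ range (i + 1), bernsteinPolynomial ℝ n k
  have hFTC := intervalIntegral.integral_eq_sub_of_hasDerivAt (fun x _ => P.hasDerivAt x)
    (P.derivative.continuous.intervalIntegrable a b)
  simp only [P, derivative_sum_range, Polynomial.eval_finsetSum, Polynomial.eval_mul,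
    Polynomial.eval_neg, Polynomial.eval_natCast, neg_mul, intervalIntegral.integral_neg] at hFTC
  linarith

end bernsteinPolynomial

section binomialMeasure

variable {n : ℕ} {p : ℝ}

lemma integral_binomialMeasure (hp0 : 0 ≤ p) (hp1 : p ≤ 1) (f : ℝ → ℝ) :
    ∫ x, f x ∂binomialMeasure n p
      = ∑ k ∈ range (n + 1), (bernsteinPolynomial ℝ n k).eval p * f k := by
  rw [binomialMeasure, integral_finsetSum_measure fun k _ =>
    ((integrable_congr (ae_eq_dirac f)).2 (integrable_const _)).smul_measure ENNReal.ofReal_ne_top]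
  refine sum_congr rfl fun k _ => ?_
  rw [integral_smul_measure, integral_dirac, ← bernsteinPolynomial.eval_eq,
    ENNReal.toReal_ofReal (bernsteinPolynomial.eval_nonneg n k hp0 hp1), smul_eq_mul]

lemma isProbabilityMeasure_binomialMeasure (hp0 : 0 ≤ p) (hp1 : p ≤ 1) :
    IsProbabilityMeasure (binomialMeasure n p) := by
  rw [isProbabilityMeasure_iff_real, ← mul_one ((binomialMeasure n p).real _), ← smul_eq_mul,
    ← integral_const, integral_binomialMeasure hp0 hp1]
  simpa using bernsteinPolynomial.sum_eval n p

lemma ae_binomialMeasure_eq_natCast : ∀ᵐ x ∂binomialMeasure n p, ∃ j ≤ n, x = (j : ℝ) := by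
  rw [ae_iff, binomialMeasure, Measure.coe_finsetSum, Finset.sum_apply]
  refine sum_eq_zero fun k hk => ?_
  simp [Measure.dirac_apply, Nat.lt_succ_iff.mp (mem_range.mp hk)]

lemma binomialMeasure_real_Iic (hp0 : 0 ≤ p) (hp1 : p ≤ 1) {i : ℕ} (hi : i ≤ n) :
    (binomialMeasure n p).real (Set.Iic (i : ℝ))
      = ∑ k ∈ range (i + 1), (bernsteinPolynomial ℝ n k).eval p := by
  rw [← integral_indicator_one measurableSet_Iic, integral_binomialMeasure hp0 hp1,
    ← sum_subset (range_subset_range.2 (by omega : i + 1 ≤ n + 1))]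
  · refine sum_congr rfl fun k hk => ?_
    simp [Nat.lt_succ_iff.mp (mem_range.mp hk)]
  · intro k _ hk
    simp [Nat.lt_succ_iff.not.mp (mt mem_range.mpr hk)]

end binomialMeasure

lemma card_le_of_forall_mem_Icc {S : Finset ℕ} {a L : ℝ} (hS : ∀ i ∈ S, (i : ℝ) ∈ Set.Icc a (a + L))
    (hL : 0 ≤ L) : (#S : ℝ) ≤ L + 1 := by
  rcases S.eq_empty_or_nonempty with rfl | hne
  · simp only [card_empty, Nat.cast_zero]
    linarith
  have hlo := (hS _ (S.min'_mem hne)).1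
  have hhi := (hS _ (S.max'_mem hne)).2
  have hle : S.min' hne ≤ S.max' hne := S.min'_le_max' hne
  calc (#S : ℝ) ≤ #(Icc (S.min' hne) (S.max' hne)) := by
        exact_mod_cast card_le_card fun i hi => mem_Icc.2 ⟨S.min'_le i hi, S.le_max' i hi⟩
    _ = (S.max' hne : ℝ) + 1 - S.min' hne := by
        rw [Nat.card_Icc, Nat.cast_sub (by omega)]
        push_cast
        ring
    _ ≤ L + 1 := by linarith

lemma sq_sum_le_mul_sum_sq_of_sum_sq_sub_mul_le {S : Finset ℕ} {g : ℕ → ℝ} {m s : ℝ}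
    (hs : 1 / 2 ≤ s) (hg : ∀ i ∈ S, 0 ≤ g i)
    (hmom : ∑ i ∈ S, ((i : ℝ) - m) ^ 2 * g i ≤ 2 * s ^ 2 * ∑ i ∈ S, g i) :
    (∑ i ∈ S, g i) ^ 2 ≤ 24 * s * ∑ i ∈ S, g i ^ 2 := by
  set W := S.filter fun i : ℕ => |(i : ℝ) - m| ≤ 2 * s
  set T := S.filter fun i : ℕ => ¬ |(i : ℝ) - m| ≤ 2 * s
  have htail : (2 * s) ^ 2 * ∑ i ∈ T, g i ≤ 2 * s ^ 2 * ∑ i ∈ S, g i := by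
    refine le_trans ?_ hmom
    rw [mul_sum]
    calc ∑ i ∈ T, (2 * s) ^ 2 * g i ≤ ∑ i ∈ T, ((i : ℝ) - m) ^ 2 * g i := by
          refine sum_le_sum fun i hi => ?_
          rw [mem_filter, not_le] at hi
          have : (2 * s) ^ 2 ≤ ((i : ℝ) - m) ^ 2 := by
            rw [← sq_abs ((i : ℝ) - m)]
            exact pow_le_pow_left₀ (by linarith) hi.2.le 2
          exact mul_le_mul_of_nonneg_right this (hg i hi.1)
      _ ≤ ∑ i ∈ S, ((i : ℝ) - m) ^ 2 * g i :=
          sum_le_sum_of_subset_of_nonneg (filter_subset _ _)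
            fun i hi _ => mul_nonneg (sq_nonneg _) (hg i hi)
  have hwindow : ∑ i ∈ S, g i ≤ 2 * ∑ i ∈ W, g i := by
    have hsplit : ∑ i ∈ W, g i + ∑ i ∈ T, g i = ∑ i ∈ S, g i :=
      sum_filter_add_sum_filter_not _ _ _
    have hT : 2 * ∑ i ∈ T, g i ≤ ∑ i ∈ S, g i :=
      le_of_mul_le_mul_left (by linarith) (by positivity : 0 < 2 * s ^ 2)
    linarith
  have hcard : (#W : ℝ) ≤ 6 * s := by
    have := card_le_of_forall_mem_Icc (S := W) (a := m - 2 * s) (L := 4 * s) (fun i hi => by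
      have := abs_le.1 (mem_filter.1 hi).2
      constructor <;> linarith) (by linarith)
    linarith
  calc (∑ i ∈ S, g i) ^ 2 ≤ 4 * (∑ i ∈ W, g i) ^ 2 := by nlinarith [sum_nonneg hg]
    _ ≤ 4 * (#W * ∑ i ∈ W, g i ^ 2) := by gcongr; exact sq_sum_le_card_mul_sum_sq
    _ ≤ 4 * (6 * s * ∑ i ∈ S, g i ^ 2) := by
        gcongr
        exact filter_subset _ _
    _ = 24 * s * ∑ i ∈ S, g i ^ 2 := by ring

lemma abs_natCast_sub_eq_sum_sq_indicator_sub {n j k : ℕ} (hj : j ≤ n) (hk : k ≤ n) :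
    |(j : ℝ) - k| = ∑ i ∈ range n,
      ((Set.Iic (i : ℝ)).indicator 1 (j : ℝ) - (Set.Iic (i : ℝ)).indicator 1 (k : ℝ)) ^ 2 := by
  wlog hjk : j ≤ k generalizing j k
  · rw [abs_sub_comm, this hk hj (not_le.1 hjk).le]
    exact sum_congr rfl fun i _ => by ring
  have hterm (i : ℕ) : ((Set.Iic (i : ℝ)).indicator 1 (j : ℝ)
      - (Set.Iic (i : ℝ)).indicator 1 (k : ℝ)) ^ 2 = if i ∈ Ico j k then (1 : ℝ) else 0 := by
    simp only [Set.indicator, Set.mem_Iic, Nat.cast_le, mem_Ico, Pi.one_apply]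
    split_ifs <;> norm_num <;> omega
  rw [sum_congr rfl fun i _ => hterm i, sum_boole, filter_mem_eq_inter,
    inter_eq_right.2 fun i hi => mem_range.2 (by grind), Nat.card_Ico,
    Nat.cast_sub hjk, abs_of_nonpos (by simpa using hjk), neg_sub]

section Energy

variable {Ω : Type*} [MeasurableSpace Ω] {μ : Measure Ω} {U V : Ω → ℝ} {s : Set ℝ}

lemma integrable_indicator_comp [IsFiniteMeasure μ] (hU : AEMeasurable U μ) (hs : MeasurableSet s) :
    Integrable (fun ω => s.indicator (1 : ℝ → ℝ) (U ω)) μ :=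
  (integrable_map_measure (measurable_one.indicator hs).aestronglyMeasurable hU).1
    ((integrable_const 1).indicator hs)

lemma integrable_indicator_comp_mul_indicator_comp [IsFiniteMeasure μ] (hU : AEMeasurable U μ)
    (hV : AEMeasurable V μ) (hs : MeasurableSet s) :
    Integrable (fun ω => s.indicator (1 : ℝ → ℝ) (U ω) * s.indicator 1 (V ω)) μ :=
  (integrable_indicator_comp hV hs).bdd_mul (c := 1)
    ((measurable_one.indicator hs).comp_aemeasurable hU).aestronglyMeasurable
    (ae_of_all _ fun ω => (norm_indicator_le_norm_self 1 _).trans_eq (by simp))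

lemma integral_indicator_comp (hU : AEMeasurable U μ) (hs : MeasurableSet s) :
    ∫ ω, s.indicator (1 : ℝ → ℝ) (U ω) ∂μ = (μ.map U).real s := by
  rw [← integral_map hU (measurable_one.indicator hs).aestronglyMeasurable,
    integral_indicator_one hs]

lemma sq_indicator_sub_indicator (x y : ℝ) :
    (s.indicator (1 : ℝ → ℝ) x - s.indicator 1 y) ^ 2
      = s.indicator 1 x + s.indicator 1 y - 2 * (s.indicator 1 x * s.indicator 1 y) := by
  by_cases hx : x ∈ s <;> by_cases hy : y ∈ s <;> norm_num [hx, hy]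

lemma integrable_sq_indicator_sub [IsFiniteMeasure μ] (hU : AEMeasurable U μ)
    (hV : AEMeasurable V μ) (hs : MeasurableSet s) :
    Integrable (fun ω => (s.indicator (1 : ℝ → ℝ) (U ω) - s.indicator 1 (V ω)) ^ 2) μ := by
  simp_rw [sq_indicator_sub_indicator]
  exact ((integrable_indicator_comp hU hs).add (integrable_indicator_comp hV hs)).sub
    ((integrable_indicator_comp_mul_indicator_comp hU hV hs).const_mul 2)

lemma ProbabilityTheory.IndepFun.integral_sq_indicator_sub [IsFiniteMeasure μ]
    (hUV : IndepFun U V μ) (hU : AEMeasurable U μ) (hV : AEMeasurable V μ) (hs : MeasurableSet s) :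
    ∫ ω, (s.indicator (1 : ℝ → ℝ) (U ω) - s.indicator 1 (V ω)) ^ 2 ∂μ
      = (μ.map U).real s + (μ.map V).real s - 2 * ((μ.map U).real s * (μ.map V).real s) := by
  have hind : Measurable (s.indicator (1 : ℝ → ℝ)) := measurable_one.indicator hs
  have hprod : ∫ ω, s.indicator (1 : ℝ → ℝ) (U ω) * s.indicator 1 (V ω) ∂μ
      = (μ.map U).real s * (μ.map V).real s := by
    rw [← integral_indicator_comp hU hs, ← integral_indicator_comp hV hs]
    exact (hUV.comp hind hind).integral_fun_mul_eq_mul_integral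
      (hind.comp_aemeasurable hU).aestronglyMeasurable
      (hind.comp_aemeasurable hV).aestronglyMeasurable
  simp_rw [sq_indicator_sub_indicator]
  rw [integral_sub
      (by exact (integrable_indicator_comp hU hs).add (integrable_indicator_comp hV hs))
      ((integrable_indicator_comp_mul_indicator_comp hU hV hs).const_mul 2),
    integral_add (integrable_indicator_comp hU hs) (integrable_indicator_comp hV hs),
    integral_const_mul, hprod, integral_indicator_comp hU hs, integral_indicator_comp hV hs]

theorem integral_energy_eq_two_mul_sum_sq_cdf_sub [IsFiniteMeasure μ] {X X' Y Y' : Ω → ℝ}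
    {ν ν' : Measure ℝ} {n : ℕ} (hX : AEMeasurable X μ) (hX' : AEMeasurable X' μ)
    (hY : AEMeasurable Y μ) (hY' : AEMeasurable Y' μ)
    (hXν : μ.map X = ν) (hX'ν : μ.map X' = ν) (hYν' : μ.map Y = ν') (hY'ν' : μ.map Y' = ν')
    (hXY : IndepFun X Y μ) (hX'Y' : IndepFun X' Y' μ) (hXX' : IndepFun X X' μ)
    (hYY' : IndepFun Y Y' μ)
    (hν : ∀ᵐ x ∂ν, ∃ j ≤ n, x = (j : ℝ)) (hν' : ∀ᵐ x ∂ν', ∃ j ≤ n, x = (j : ℝ)) :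
    ∫ ω, (|X ω - Y ω| + |X' ω - Y' ω| - |X ω - X' ω| - |Y ω - Y' ω|) ∂μ
      = 2 * ∑ i ∈ range n, (ν.real (Set.Iic (i : ℝ)) - ν'.real (Set.Iic (i : ℝ))) ^ 2 := by
  set d : ℕ → (Ω → ℝ) → (Ω → ℝ) → Ω → ℝ := fun i U V ω =>
    ((Set.Iic (i : ℝ)).indicator 1 (U ω) - (Set.Iic (i : ℝ)).indicator 1 (V ω)) ^ 2
  have hd_int (i : ℕ) {U V : Ω → ℝ} (hU : AEMeasurable U μ) (hV : AEMeasurable V μ) :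
      Integrable (d i U V) μ :=
    integrable_sq_indicator_sub hU hV measurableSet_Iic
  have hvalues {U : Ω → ℝ} {ρ : Measure ℝ} (hU : AEMeasurable U μ) (hUρ : μ.map U = ρ)
      (hρ : ∀ᵐ x ∂ρ, ∃ j ≤ n, x = (j : ℝ)) : ∀ᵐ ω ∂μ, ∃ j ≤ n, U ω = (j : ℝ) :=
    ae_of_ae_map hU (hUρ ▸ hρ)
  have hsplit : (fun ω => |X ω - Y ω| + |X' ω - Y' ω| - |X ω - X' ω| - |Y ω - Y' ω|)
      =ᵐ[μ] fun ω => ∑ i ∈ range n, (d i X Y ω + d i X' Y' ω - d i X X' ω - d i Y Y' ω) := by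
    filter_upwards [hvalues hX hXν hν, hvalues hX' hX'ν hν, hvalues hY hYν' hν',
      hvalues hY' hY'ν' hν'] with ω ⟨a, ha, hXa⟩ ⟨a', ha', hX'a'⟩ ⟨b, hb, hYb⟩ ⟨b', hb', hY'b'⟩
    simp only [d, sum_sub_distrib, sum_add_distrib, hXa, hX'a', hYb, hY'b',
      abs_natCast_sub_eq_sum_sq_indicator_sub ha hb,
      abs_natCast_sub_eq_sum_sq_indicator_sub ha' hb',
      abs_natCast_sub_eq_sum_sq_indicator_sub ha ha',
      abs_natCast_sub_eq_sum_sq_indicator_sub hb hb']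
  rw [integral_congr_ae hsplit, integral_finsetSum _ fun i _ => by
    exact (((hd_int i hX hY).add (hd_int i hX' hY')).sub (hd_int i hX hX')).sub (hd_int i hY hY'),
    mul_sum]
  refine sum_congr rfl fun i _ => ?_
  rw [integral_sub (by exact ((hd_int i hX hY).add (hd_int i hX' hY')).sub (hd_int i hX hX'))
      (hd_int i hY hY'),
    integral_sub (by exact (hd_int i hX hY).add (hd_int i hX' hY')) (hd_int i hX hX'),
    integral_add (hd_int i hX hY) (hd_int i hX' hY')]
  simp only [d, hXY.integral_sq_indicator_sub hX hY measurableSet_Iic,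
    hX'Y'.integral_sq_indicator_sub hX' hY' measurableSet_Iic,
    hXX'.integral_sq_indicator_sub hX hX' measurableSet_Iic,
    hYY'.integral_sq_indicator_sub hY hY' measurableSet_Iic, hXν, hX'ν, hYν', hY'ν']
  ring

end Energy

lemma binomial_second_moment_le_of_mem_Icc {N : ℕ} {p q r s : ℝ} (hq0 : 0 ≤ q) (hq1 : q ≤ 1 / 4)
    (hr : r ∈ Set.Icc q p) (hs : 1 / 2 ≤ s) (hs2 : s ^ 2 = ((N : ℝ) + 1) * (p + q))
    (hdiff : ((N : ℝ) + 1) * (p - q) < s) :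
    N * r * (1 - r) + (N * r - s ^ 2 / 2) ^ 2 ≤ 2 * s ^ 2 := by
  obtain ⟨hqr, hrp⟩ := hr
  have hN : (0 : ℝ) ≤ N := N.cast_nonneg
  have hvar : N * r * (1 - r) ≤ s ^ 2 := by nlinarith [mul_nonneg hN (sq_nonneg r)]
  have hdev : (N * r - s ^ 2 / 2) ^ 2 ≤ s ^ 2 := by
    refine sq_le_sq' ?_ ?_ <;> nlinarith [mul_le_mul_of_nonneg_left hqr hN,
      mul_le_mul_of_nonneg_left hrp hN]
  linarith

theorem sq_le_mul_sum_sq_binomialMeasure_real_Iic_sub {N : ℕ} {p q : ℝ}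
    (hp : p ∈ Set.Icc (0 : ℝ) (1 / 4)) (hq : q ∈ Set.Icc (0 : ℝ) (1 / 4))
    (hsum : 1 / 2 < ((N : ℝ) + 1) * (p + q))
    (hdiff : ((N : ℝ) + 1) * |p - q| < √(((N : ℝ) + 1) * (p + q))) :
    (((N : ℝ) + 1) * (p - q)) ^ 2 ≤ 24 * √(((N : ℝ) + 1) * (p + q)) * ∑ i ∈ range (N + 1),
      ((binomialMeasure (N + 1) p).real (Set.Iic (i : ℝ))
        - (binomialMeasure (N + 1) q).real (Set.Iic (i : ℝ))) ^ 2 := by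
  wlog hqp : q ≤ p generalizing p q
  · have h := this hq hp (by rwa [add_comm q p]) (by rwa [abs_sub_comm, add_comm q p])
      (not_le.1 hqp).le
    rw [add_comm q p] at h
    calc _ = (((N : ℝ) + 1) * (q - p)) ^ 2 := by ring
      _ ≤ _ := h
      _ = _ := by congr 1; exact sum_congr rfl fun i _ => by ring
  obtain ⟨hp0, hp1⟩ := hp
  obtain ⟨hq0, hq1⟩ := hq
  set s := √(((N : ℝ) + 1) * (p + q))
  have hs2 : s ^ 2 = ((N : ℝ) + 1) * (p + q) := Real.sq_sqrt (by positivity)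
  have hs : 1 / 2 ≤ s := by nlinarith [Real.sqrt_nonneg (((N : ℝ) + 1) * (p + q))]
  set g : ℕ → ℝ := fun i => ∫ r in q..p, ((N : ℝ) + 1) * (bernsteinPolynomial ℝ N i).eval r
  have hcdf : ∀ i ∈ range (N + 1), (binomialMeasure (N + 1) p).real (Set.Iic (i : ℝ))
      - (binomialMeasure (N + 1) q).real (Set.Iic (i : ℝ)) = -g i := by
    intro i hi
    rw [binomialMeasure_real_Iic hp0 (by linarith) (mem_range.1 hi).le,
      binomialMeasure_real_Iic hq0 (by linarith) (mem_range.1 hi).le,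
      bernsteinPolynomial.sum_range_eval_sub_eq_integral, ← intervalIntegral.integral_symm]
    simp
  have hg : ∀ i ∈ range (N + 1), 0 ≤ g i := fun i _ =>
    intervalIntegral.integral_nonneg hqp fun r hr => mul_nonneg (by positivity)
      (bernsteinPolynomial.eval_nonneg N i (by linarith [hr.1]) (by linarith [hr.2]))
  have hsum_mul (f : ℕ → ℝ) : ∑ i ∈ range (N + 1), f i * g i
      = ∫ r in q..p,
          ((N : ℝ) + 1) * ∑ i ∈ range (N + 1), f i * (bernsteinPolynomial ℝ N i).eval r := by
    simp only [g, ← intervalIntegral.integral_const_mul, mul_sum]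
    rw [intervalIntegral.integral_finsetSum fun i _ =>
      (by fun_prop : Continuous _).intervalIntegrable q p]
    exact sum_congr rfl fun i _ => by congr 1; ext r; ring
  have hmass : ∑ i ∈ range (N + 1), g i = ((N : ℝ) + 1) * (p - q) := by
    have h := hsum_mul 1
    simp only [Pi.one_apply, one_mul, bernsteinPolynomial.sum_eval, mul_one,
      intervalIntegral.integral_const, smul_eq_mul] at h
    linarith
  have hmom : ∑ i ∈ range (N + 1), ((i : ℝ) - s ^ 2 / 2) ^ 2 * g i
      ≤ 2 * s ^ 2 * ∑ i ∈ range (N + 1), g i := by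
    simp only [hsum_mul, bernsteinPolynomial.sum_sq_natCast_sub_mul_eval, hmass]
    calc _ ≤ ∫ r in q..p, ((N : ℝ) + 1) * (2 * s ^ 2) := by
          refine intervalIntegral.integral_mono_on hqp
            ((by fun_prop : Continuous _).intervalIntegrable q p) intervalIntegrable_const
            fun r hr => ?_
          gcongr
          exact binomial_second_moment_le_of_mem_Icc hq0 hq1 hr hs hs2
            (by rwa [abs_of_nonneg (by linarith)] at hdiff)
      _ = 2 * s ^ 2 * (((N : ℝ) + 1) * (p - q)) := by
          rw [intervalIntegral.integral_const, smul_eq_mul]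
          ring
  have key := sq_sum_le_mul_sum_sq_of_sum_sq_sub_mul_le hs hg hmom
  rw [hmass] at key
  calc _ ≤ 24 * s * ∑ i ∈ range (N + 1), g i ^ 2 := key
    _ = _ := by congr 1; exact sum_congr rfl fun i hi => by rw [hcdf i hi, neg_sq]

theorem binomial_expectation_gap_case_general {Ω : Type*} [MeasurableSpace Ω] (μ : Measure Ω)
    [IsProbabilityMeasure μ]
    (p q : ℝ) (hp : p ∈ Set.Icc (0 : ℝ) (1/4)) (hq : q ∈ Set.Icc (0 : ℝ) (1/4))
    (n : ℕ)
    (hsum : 1/2 < (n : ℝ) * (p + q)) (hdiff : (n : ℝ) * |p - q| < Real.sqrt (n * (p + q)))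
    (X X' Y Y' : Ω → ℝ)
    (hindep : iIndepFun ![X, X', Y, Y'] μ)
    (hX : Measure.map X μ = binomialMeasure n p)
    (hX' : Measure.map X' μ = binomialMeasure n p)
    (hY : Measure.map Y μ = binomialMeasure n q)
    (hY' : Measure.map Y' μ = binomialMeasure n q) :
    ∫ ω, (|X ω - Y ω| + |X' ω - Y' ω| - |X ω - X' ω| - |Y ω - Y' ω|) ∂μ ≥
      n ^ 2 * (p - q) ^ 2 / (40 * Real.sqrt (n * (p + q))) := by
  have hmeas {U : Ω → ℝ} {r : ℝ} (hr : r ∈ Set.Icc (0 : ℝ) (1 / 4))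
      (hU : μ.map U = binomialMeasure n r) : AEMeasurable U μ :=
    .of_map_ne_zero <| hU ▸
      (isProbabilityMeasure_binomialMeasure hr.1 (by linarith [hr.2])).ne_zero
  rw [ge_iff_le, integral_energy_eq_two_mul_sum_sq_cdf_sub (hmeas hp hX) (hmeas hp hX')
    (hmeas hq hY) (hmeas hq hY') hX hX' hY hY' (hindep.indepFun (i := 0) (j := 2) (by decide))
    (hindep.indepFun (i := 1) (j := 3) (by decide)) (hindep.indepFun (i := 0) (j := 1) (by decide))
    (hindep.indepFun (i := 2) (j := 3) (by decide)) ae_binomialMeasure_eq_natCast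
    ae_binomialMeasure_eq_natCast]
  obtain ⟨N, rfl⟩ : ∃ N, n = N + 1 :=
    Nat.exists_eq_succ_of_ne_zero fun hn => by subst hn; norm_num at hsum
  push_cast at hsum hdiff ⊢
  have key := sq_le_mul_sum_sq_binomialMeasure_real_Iic_sub hp hq hsum hdiff
  have hs : 0 < √(((N : ℝ) + 1) * (p + q)) := Real.sqrt_pos.2 (by linarith)
  rw [div_le_iff₀ (by positivity)]
  nlinarith [sum_nonneg fun i (_ : i ∈ range (N + 1)) => sq_nonneg
    ((binomialMeasure (N + 1) p).real (Set.Iic (i : ℝ))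
      - (binomialMeasure (N + 1) q).real (Set.Iic (i : ℝ)))]

theorem binomial_expectation_gap_case {Ω : Type*} [MeasurableSpace Ω] (μ : Measure Ω)
    [IsProbabilityMeasure μ]
    (p q : ℝ) (hp : p ∈ Set.Icc (0 : ℝ) (1/4)) (hq : q ∈ Set.Icc (0 : ℝ) (1/4))
    (n : ℕ) (hn : 16 ≤ n)
    (hsum : 1/2 < (n : ℝ) * (p + q)) (hdiff : (n : ℝ) * |p - q| < Real.sqrt (n * (p + q)))
    (X X' Y Y' : Ω → ℝ)
    (hXm : Measurable X) (hX'm : Measurable X') (hYm : Measurable Y) (hY'm : Measurable Y')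
    (hindep : iIndepFun ![X, X', Y, Y'] μ)
    (hX : Measure.map X μ = binomialMeasure n p)
    (hX' : Measure.map X' μ = binomialMeasure n p)
    (hY : Measure.map Y μ = binomialMeasure n q)
    (hY' : Measure.map Y' μ = binomialMeasure n q) :
    ∫ ω, (|X ω - Y ω| + |X' ω - Y' ω| - |X ω - X' ω| - |Y ω - Y' ω|) ∂μ ≥
      n ^ 2 * (p - q) ^ 2 / (40 * Real.sqrt (n * (p + q))) :=
  binomial_expectation_gap_case_general μ p q hp hq n hsum hdiff X X' Y Y' hindep hX hX' hY hY'
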